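/- Let C be a regular, irreducible curve that is projective over a field k, with function field F = k(C), arithmetic genus t, and a k-rational point O. If f in F^* has the support of its divisor contained in C_{≤t}, then f lies in the subgroup of F^* generated by the nonzero elements of RR_{3t}. -/

import Mathlib

open scoped TensorProduct

noncomputable section

/-- The set of Steinberg relations in `Fˣ ⊗_ℤ Fˣ` (written additively):
the elements `a ⊗ b` with `a + b = 1` in `F`. -/
def SteinbergSet (F : Type*) [Field F] :
    Set (TensorProduct ℤ (Additive Fˣ) (Additive Fˣ)) :=
  { x | ∃ a b : Fˣ, (a : F) + (b : F) = 1 ∧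
      x = Additive.ofMul a ⊗ₜ[ℤ] Additive.ofMul b }

/-- Milnor's `K₂` of a field, via Matsumoto's presentation. -/
abbrev K2 (F : Type*) [Field F] :=
  (TensorProduct ℤ (Additive Fˣ) (Additive Fˣ)) ⧸
    Submodule.span ℤ (SteinbergSet F)

/-- The symbol `{f, g}` in `K₂(F)`. -/
def symbol {F : Type*} [Field F] (f g : Fˣ) : K2 F :=
  Submodule.Quotient.mk (Additive.ofMul f ⊗ₜ[ℤ] Additive.ofMul g)

/-- The degree of a divisor `D` on the curve: `∑_P deg(P) · D(P)`,
where `deg P = [k(P) : k]`. -/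
def divDeg (k : Type*) [Field k] {Pt : Type*} (res : Pt → Type*)
    [∀ P, Field (res P)] [∀ P, Algebra k (res P)] (D : Pt →₀ ℤ) : ℤ :=
  ∑ᶠ P, (Module.finrank k (res P) : ℤ) * D P

/-- Axioms for a regular, irreducible curve `C`, projective over a field `k`, with
`H⁰(C, O_C) = k`, presented through: its function field `F = k(C)`, its set `Pt` of
closed points, the residue fields `res P = k(P)`, the normalized valuations `ord P`,
the evaluation maps `ev P` (evaluation at `P` of functions regular at `P`), the
Riemann-Roch spaces `L D = H⁰(C, O_C(D))`, and the arithmetic genus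
`t = dim_k H¹(C, O_C)`, characterized by the Riemann-Roch relations. -/
structure IsProjCurve (k F : Type*) [Field k] [Field F] [Algebra k F]
    {Pt : Type*} (res : Pt → Type*) [∀ P, Field (res P)] [∀ P, Algebra k (res P)]
    (ord : Pt → F → ℤ) (ev : ∀ P, F → res P)
    (L : (Pt →₀ ℤ) → Submodule k F) (t : ℕ) : Prop where
  finiteDimensional_res : ∀ P, FiniteDimensional k (res P)
  ord_mul : ∀ P (f g : F), f ≠ 0 → g ≠ 0 → ord P (f * g) = ord P f + ord P g
  ord_add : ∀ P (f g : F), f ≠ 0 → g ≠ 0 → f + g ≠ 0 →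
      min (ord P f) (ord P g) ≤ ord P (f + g)
  ord_algebraMap : ∀ P (c : k), c ≠ 0 → ord P (algebraMap k F c) = 0
  ord_uniformizer : ∀ P, ∃ f : F, f ≠ 0 ∧ ord P f = 1
  ord_separates : ∀ P Q, (∀ f : F, ord P f = ord Q f) → P = Q
  support_finite : ∀ f : F, f ≠ 0 → {P | ord P f ≠ 0}.Finite
  degree_formula : ∀ f : F, f ≠ 0 →
      ∑ᶠ P, (Module.finrank k (res P) : ℤ) * ord P f = 0
  ev_zero : ∀ P, ev P 0 = 0
  ev_one : ∀ P, ev P 1 = 1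
  ev_add : ∀ P (f g : F), f ≠ 0 → g ≠ 0 → 0 ≤ ord P f → 0 ≤ ord P g →
      ev P (f + g) = ev P f + ev P g
  ev_mul : ∀ P (f g : F), f ≠ 0 → g ≠ 0 → 0 ≤ ord P f → 0 ≤ ord P g →
      ev P (f * g) = ev P f * ev P g
  ev_algebraMap : ∀ P (c : k), ev P (algebraMap k F c) = algebraMap k (res P) c
  ev_eq_zero_iff : ∀ P (f : F), f ≠ 0 → 0 ≤ ord P f → (ev P f = 0 ↔ 0 < ord P f)
  ev_surjective : ∀ P (y : res P), ∃ f : F, f ≠ 0 ∧ 0 ≤ ord P f ∧ ev P f = y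
  mem_L : ∀ (D : Pt →₀ ℤ) (f : F), f ∈ L D ↔ (f ≠ 0 → ∀ P, 0 ≤ D P + ord P f)
  finiteDimensional_L : ∀ D, FiniteDimensional k (L D)
  global_sections : ∀ f : F, f ∈ L 0 ↔ ∃ c : k, algebraMap k F c = f
  rr_ineq : ∀ D : Pt →₀ ℤ,
      divDeg k res D + 1 - t ≤ (Module.finrank k (L D) : ℤ)
  rr_eq : ∀ D : Pt →₀ ℤ, 2 * (t : ℤ) - 2 < divDeg k res D →
      (Module.finrank k (L D) : ℤ) = divDeg k res D + 1 - t

/-- `T` is the tame symbol `K₂(F) → ∐_{P} k(P)^*`: it is determined by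
`T_P({f,g}) = (-1)^{ord_P(f)·ord_P(g)} (f^{ord_P(g)} / g^{ord_P(f)})(P)`. -/
def IsTameSymbol {F : Type*} [Field F] {Pt : Type*} {res : Pt → Type*}
    [∀ P, Field (res P)]
    (ord : Pt → F → ℤ) (ev : ∀ P, F → res P)
    (T : K2 F →+ Π₀ P : Pt, Additive ((res P)ˣ)) : Prop :=
  ∀ (f g : Fˣ) (P : Pt),
    ((Additive.toMul (T (symbol f g) P) : (res P)ˣ) : res P) =
      ev P (((-1 : Fˣ) ^ (ord P (f : F) * ord P (g : F)) *
        f ^ (ord P (g : F)) * g ^ (-ord P (f : F)) : Fˣ) : F)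

/-!
Write `A(f)` for the divisor of `f` with the point `O` removed. For an effective `E` supported
away from `O` with `deg E ≤ 2t`, Riemann–Roch gives a nonzero `h` in `L((t + deg E)(O) - E)`:
it lies in `RR_{3t}`, vanishes along `E`, and its remaining zeros away from `O` have total degree
at most `t`. Taking `E ≤ A(f)⁻` with `t < deg E ≤ 2t` (such a chunk of the poles exists because
they sit at points of degree `≤ t`) makes `deg |A(f h)| < deg |A(f)|`. While `deg |A(f)| > 2t`,
the poles of `f` or of `f⁻¹` have degree `> t`, so by induction we reach `deg |A(f)| ≤ 2t`.
Then `E = A(f)⁻` removes all poles away from `O`, and the degree formula bounds the pole order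
of `f h` at `O` by `3t`.
-/

open Module Finsupp

theorem Int.abs_add_le_of_le_negPart {a b e : ℤ} (hea : e ≤ a⁻) (heb : e ≤ b) :
    |a + b| ≤ |a| - e + (b - e) := by
  rw [negPart_def] at hea
  rw [abs_le]
  constructor <;> cases abs_cases a <;> omega

namespace Finsupp

variable {ι : Type*}

@[simp] theorem negPart_apply (D : ι →₀ ℤ) (i : ι) : D⁻ i = (D i)⁻ := rfl

theorem single_one_le_of_ne_zero {D : ι →₀ ℤ} (hD : 0 ≤ D) {i : ι} (hi : D i ≠ 0) :
    single i 1 ≤ D := fun j => by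
  rcases eq_or_ne j i with rfl | hj
  · simpa using Int.add_one_le_iff.mpr (lt_of_le_of_ne (hD j) hi.symm)
  · simpa [single_eq_of_ne hj] using hD j

end Finsupp

section DivisorDegree

variable {k : Type*} [Field k] {Pt : Type*} {res : Pt → Type*} [∀ P, Field (res P)]
  [∀ P, Algebra k (res P)] {t : ℕ}

theorem divDeg_eq_linearCombination (D : Pt →₀ ℤ) :
    divDeg k res D = linearCombination ℤ (fun P => (finrank k (res P) : ℤ)) D := by
  rw [divDeg, linearCombination_apply, Finsupp.sum]
  simp_rw [smul_eq_mul, mul_comm (D _)]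
  refine finsum_eq_sum_of_support_subset _ fun P hP => ?_
  rw [Finset.mem_coe, Finsupp.mem_support_iff]
  rintro hDP
  simp [hDP] at hP

theorem divDeg_add (D E : Pt →₀ ℤ) :
    divDeg k res (D + E) = divDeg k res D + divDeg k res E := by
  simp only [divDeg_eq_linearCombination, map_add]

theorem divDeg_sub (D E : Pt →₀ ℤ) :
    divDeg k res (D - E) = divDeg k res D - divDeg k res E := by
  simp only [divDeg_eq_linearCombination, map_sub]

theorem divDeg_single (P : Pt) (n : ℤ) :
    divDeg k res (single P n) = finrank k (res P) * n := by
  rw [divDeg_eq_linearCombination, linearCombination_single, smul_eq_mul, mul_comm]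

theorem divDeg_erase (D : Pt →₀ ℤ) (P : Pt) :
    divDeg k res (D.erase P) = divDeg k res D - finrank k (res P) * D P := by
  rw [erase_eq_sub_single, divDeg_sub, divDeg_single]

theorem divDeg_nonneg {D : Pt →₀ ℤ} (hD : 0 ≤ D) : 0 ≤ divDeg k res D := by
  rw [divDeg_eq_linearCombination, linearCombination_apply]
  exact sum_nonneg' fun P => mul_nonneg (hD P) (Int.natCast_nonneg _)

theorem divDeg_mono : Monotone (divDeg k res : (Pt →₀ ℤ) → ℤ) := fun D E hDE => by
  have := divDeg_nonneg (k := k) (res := res) (sub_nonneg.mpr hDE)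
  rwa [divDeg_sub, sub_nonneg] at this

theorem finrank_le_divDeg {D : Pt →₀ ℤ} (hD : 0 ≤ D) {P : Pt} (hP : D P ≠ 0) :
    (finrank k (res P) : ℤ) ≤ divDeg k res D := by
  simpa [divDeg_single] using divDeg_mono (Finsupp.single_one_le_of_ne_zero hD hP)

theorem divDeg_abs_add_le {A B E : Pt →₀ ℤ} (hEA : E ≤ A⁻) (hEB : E ≤ B) :
    divDeg k res |A + B| ≤ divDeg k res |A| - divDeg k res E + divDeg k res (B - E) := by
  rw [← divDeg_sub, ← divDeg_add]
  exact divDeg_mono fun P => Int.abs_add_le_of_le_negPart (hEA P) (hEB P)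

def IsSupportedInDegreeLE (k : Type*) [Field k] {Pt : Type*} (res : Pt → Type*)
    [∀ P, Field (res P)] [∀ P, Algebra k (res P)] (t : ℕ) (D : Pt →₀ ℤ) : Prop :=
  ∀ P, D P ≠ 0 → finrank k (res P) ≤ t

namespace IsSupportedInDegreeLE

theorem of_le {D E : Pt →₀ ℤ} (hD : IsSupportedInDegreeLE k res t D) (hE : 0 ≤ E)
    (hED : E ≤ D) : IsSupportedInDegreeLE k res t E :=
  fun P hP => hD P (lt_of_lt_of_le (lt_of_le_of_ne (hE P) hP.symm) (hED P)).ne'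

theorem neg {D : Pt →₀ ℤ} (hD : IsSupportedInDegreeLE k res t D) :
    IsSupportedInDegreeLE k res t (-D) :=
  fun P hP => hD P (by simpa using hP)

theorem negPart {D : Pt →₀ ℤ} (hD : IsSupportedInDegreeLE k res t D) :
    IsSupportedInDegreeLE k res t D⁻ :=
  fun P hP => hD P fun h => hP (by simp [negPart_def, h])

theorem erase {D : Pt →₀ ℤ} (hD : IsSupportedInDegreeLE k res t D) (O : Pt) :
    IsSupportedInDegreeLE k res t (D.erase O) := fun P hP => by
  rcases eq_or_ne P O with rfl | hPO
  · simp at hP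
  · exact hD P (by rwa [erase_ne hPO] at hP)

theorem add {A B E : Pt →₀ ℤ} (hA : IsSupportedInDegreeLE k res t A)
    (hE : 0 ≤ E) (hEA : E ≤ A⁻) (hBE : 0 ≤ B - E) (hdeg : divDeg k res (B - E) ≤ t) :
    IsSupportedInDegreeLE k res t (A + B) := by
  intro P hP
  by_cases hAP : A P = 0
  · have hEP : E P = 0 := le_antisymm (by simpa [hAP] using hEA P) (hE P)
    have hBEP : (B - E) P ≠ 0 := by simpa [hAP, hEP] using hP
    exact_mod_cast (finrank_le_divDeg hBE hBEP).trans hdeg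
  · exact hA P hAP

end IsSupportedInDegreeLE

theorem exists_le_divDeg_mem_Ioc [∀ P, FiniteDimensional k (res P)] {D : Pt →₀ ℤ}
    (hD : 0 ≤ D) (hsupp : IsSupportedInDegreeLE k res t D) (ht : t < divDeg k res D) :
    ∃ E, 0 ≤ E ∧ E ≤ D ∧ divDeg k res E ∈ Set.Ioc (t : ℤ) (2 * t) := by
  induction hn : (divDeg k res D).toNat using Nat.strong_induction_on generalizing D with
  | _ n ih =>
  by_cases hsmall : divDeg k res D ≤ 2 * t
  · exact ⟨D, hD, le_rfl, ht, hsmall⟩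
  obtain ⟨P, hP⟩ : ∃ P, D P ≠ 0 := by
    by_contra! h
    rw [show D = 0 from Finsupp.ext h, divDeg_eq_linearCombination, map_zero] at ht
    omega
  have hPt := hsupp P hP
  have hPpos : 0 < finrank k (res P) := Module.finrank_pos
  have hle : D - single P 1 ≤ D := sub_le_self D (single_nonneg.mpr zero_le_one)
  have hnonneg : 0 ≤ D - single P 1 := sub_nonneg.mpr (single_one_le_of_ne_zero hD hP)
  have hdeg : divDeg k res (D - single P 1) = divDeg k res D - finrank k (res P) := by
    rw [divDeg_sub, divDeg_single, mul_one]
  obtain ⟨E, hE, hED, hEdeg⟩ :=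
    ih _ (by omega) hnonneg (hsupp.of_le hnonneg hle) (by omega) rfl
  exact ⟨E, hE, hED.trans hle, hEdeg⟩

end DivisorDegree

namespace IsProjCurve

variable {k F : Type*} [Field k] [Field F] [Algebra k F] {Pt : Type*} {res : Pt → Type*}
  [∀ P, Field (res P)] [∀ P, Algebra k (res P)] {ord : Pt → F → ℤ} {ev : ∀ P, F → res P}
  {L : (Pt →₀ ℤ) → Submodule k F} {t : ℕ} (hC : IsProjCurve k F res ord ev L t)

include hC

theorem ord_one (P : Pt) : ord P 1 = 0 := by
  simpa using hC.ord_mul P 1 1 one_ne_zero one_ne_zero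

def divisor (f : Fˣ) : Pt →₀ ℤ :=
  Finsupp.ofSupportFinite (fun P => ord P f) (hC.support_finite _ f.ne_zero)

@[simp] theorem divisor_apply (f : Fˣ) (P : Pt) : hC.divisor f P = ord P f := rfl

theorem divisor_mul (f g : Fˣ) : hC.divisor (f * g) = hC.divisor f + hC.divisor g :=
  Finsupp.ext fun P => hC.ord_mul P f g f.ne_zero g.ne_zero

theorem divisor_inv (f : Fˣ) : hC.divisor f⁻¹ = -hC.divisor f := by
  refine eq_neg_of_add_eq_zero_left (Finsupp.ext fun P => ?_)
  simp [← hC.divisor_mul, hC.ord_one]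

theorem divDeg_divisor (f : Fˣ) : divDeg k res (hC.divisor f) = 0 :=
  hC.degree_formula f f.ne_zero

theorem coe_mem_L_iff {D : Pt →₀ ℤ} (h : Fˣ) : (h : F) ∈ L D ↔ -D ≤ hC.divisor h := by
  rw [hC.mem_L, Finsupp.le_def]
  simp only [ne_eq, h.ne_zero, not_false_eq_true, forall_const, Finsupp.neg_apply,
    divisor_apply, neg_le_iff_add_nonneg, add_comm]

theorem L_mono {D D' : Pt →₀ ℤ} (hD : D ≤ D') : L D ≤ L D' := fun f hf => by
  rw [hC.mem_L] at hf ⊢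
  exact fun hf0 P => (hf hf0 P).trans (by simpa using hD P)

theorem exists_coe_mem_L {D : Pt →₀ ℤ} (hD : t ≤ divDeg k res D) : ∃ h : Fˣ, (h : F) ∈ L D := by
  have := hC.finiteDimensional_L D
  have : 0 < finrank k (L D) := by have := hC.rr_ineq D; omega
  obtain ⟨⟨x, hx⟩, hx0⟩ := Module.finrank_pos_iff_exists_ne_zero.mp this
  exact ⟨Units.mk0 x (by simpa using hx0), hx⟩

variable {O : Pt} (hO : finrank k (res O) = 1)
include hO

theorem coe_mem_L_single_of_erase_nonneg {g : Fˣ} {n : ℤ} (hg : 0 ≤ (hC.divisor g).erase O)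
    (hdeg : divDeg k res ((hC.divisor g).erase O) ≤ n) : (g : F) ∈ L (single O n) := by
  rw [hC.coe_mem_L_iff]
  intro P
  rcases eq_or_ne P O with rfl | hP
  · rw [divDeg_erase, hC.divDeg_divisor, hO] at hdeg
    simp only [Finsupp.neg_apply, single_eq_same, divisor_apply] at hdeg ⊢
    omega
  · simpa [single_eq_of_ne hP, erase_ne hP] using hg P

/-- Riemann–Roch applied to `(t + deg E)(O) - E`, a divisor of degree `t`. -/
theorem exists_coe_mem_L_single_erase_sub_nonneg {E : Pt →₀ ℤ} (hE : 0 ≤ E) (hEO : E O = 0)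
    (hdeg : divDeg k res E ≤ 2 * t) :
    ∃ h : Fˣ, (h : F) ∈ L (single O (3 * t)) ∧ 0 ≤ (hC.divisor h).erase O - E ∧
      divDeg k res ((hC.divisor h).erase O - E) ≤ t := by
  set D := single O (t + divDeg k res E) - E
  have hD : divDeg k res D = t := by
    simp only [D, divDeg_sub, divDeg_single, hO]
    ring
  obtain ⟨h, hh⟩ := hC.exists_coe_mem_L hD.ge
  have hdiv := (hC.coe_mem_L_iff h).mp hh
  have hordO : -(t + divDeg k res E) ≤ ord O h := by simpa [D, hEO] using hdiv O
  refine ⟨h, hC.L_mono ((sub_le_self _ hE).trans ?_) hh, fun P => ?_, ?_⟩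
  · exact single_mono (by linarith [divDeg_nonneg (k := k) (res := res) hE])
  · rcases eq_or_ne P O with rfl | hP
    · simp [hEO]
    · simpa [D, single_eq_of_ne hP, erase_ne hP] using hdiv P
  · rw [divDeg_sub, divDeg_erase, hC.divDeg_divisor, hO]
    simp only [divisor_apply, Nat.cast_one, one_mul]
    linarith

theorem mem_closure_of_divDeg_abs_erase_le {f : Fˣ}
    (hf : divDeg k res |(hC.divisor f).erase O| ≤ 2 * t) :
    f ∈ Subgroup.closure {g : Fˣ | (g : F) ∈ L (single O (3 * t))} := by
  set A := (hC.divisor f).erase O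
  have hpoles : divDeg k res A⁻ ≤ 2 * t :=
    (divDeg_mono (sup_le (neg_le_abs A) (abs_nonneg A))).trans hf
  obtain ⟨h, hL, hB, hBt⟩ := hC.exists_coe_mem_L_single_erase_sub_nonneg hO (negPart_nonneg A)
    (by simp [A]) hpoles
  set B := (hC.divisor h).erase O
  have hAB : (hC.divisor (f * h)).erase O = A + B := by rw [divisor_mul, erase_add]
  have hfh : ((f * h : Fˣ) : F) ∈ L (single O (3 * t)) := by
    have hBA : A⁻ ≤ B := sub_nonneg.mp hB
    have hnonneg : 0 ≤ A + B := neg_le_iff_add_nonneg'.mp ((neg_le_negPart A).trans hBA)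
    refine hC.coe_mem_L_single_of_erase_nonneg hO (hAB ▸ hnonneg) ?_
    have := divDeg_abs_add_le (k := k) (res := res) le_rfl hBA
    rw [abs_of_nonneg hnonneg] at this
    rw [hAB]
    linarith [divDeg_nonneg (k := k) (res := res) (negPart_nonneg A)]
  rw [show f = f * h * h⁻¹ by group]
  exact mul_mem (Subgroup.subset_closure hfh) (inv_mem (Subgroup.subset_closure hL))

theorem exists_coe_mem_L_single_divDeg_abs_erase_mul_lt [∀ P, FiniteDimensional k (res P)]
    {f : Fˣ} (hf : IsSupportedInDegreeLE k res t ((hC.divisor f).erase O))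
    (hpoles : t < divDeg k res ((hC.divisor f).erase O)⁻) :
    ∃ h : Fˣ, (h : F) ∈ L (single O (3 * t)) ∧
      IsSupportedInDegreeLE k res t ((hC.divisor (f * h)).erase O) ∧
      divDeg k res |(hC.divisor (f * h)).erase O| < divDeg k res |(hC.divisor f).erase O| := by
  set A := (hC.divisor f).erase O
  obtain ⟨E, hE, hEA, hEt, hE2t⟩ := exists_le_divDeg_mem_Ioc (negPart_nonneg A) hf.negPart hpoles
  have hEO : E O = 0 := le_antisymm (by simpa [A] using hEA O) (hE O)
  obtain ⟨h, hL, hB, hBt⟩ := hC.exists_coe_mem_L_single_erase_sub_nonneg hO hE hEO hE2t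
  refine ⟨h, hL, ?_, ?_⟩ <;> rw [divisor_mul, erase_add]
  · exact hf.add hE hEA hB hBt
  · have := divDeg_abs_add_le (k := k) (res := res) hEA (sub_nonneg.mp hB)
    linarith

theorem mem_closure_of_isSupportedInDegreeLE (f : Fˣ)
    (hf : IsSupportedInDegreeLE k res t ((hC.divisor f).erase O)) :
    f ∈ Subgroup.closure {g : Fˣ | (g : F) ∈ L (single O (3 * t))} := by
  have := hC.finiteDimensional_res
  induction hn : (divDeg k res |(hC.divisor f).erase O|).toNat using Nat.strong_induction_on
    generalizing f with
  | _ n ih =>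
  by_cases hsmall : divDeg k res |(hC.divisor f).erase O| ≤ 2 * t
  · exact hC.mem_closure_of_divDeg_abs_erase_le hO hsmall
  have descend : ∀ g : Fˣ, IsSupportedInDegreeLE k res t ((hC.divisor g).erase O) →
      t < divDeg k res ((hC.divisor g).erase O)⁻ →
      divDeg k res |(hC.divisor g).erase O| = divDeg k res |(hC.divisor f).erase O| →
      g ∈ Subgroup.closure {g : Fˣ | (g : F) ∈ L (single O (3 * t))} := by
    intro g hg hpoles hgf
    obtain ⟨h, hL, hgh, hlt⟩ := hC.exists_coe_mem_L_single_divDeg_abs_erase_mul_lt hO hg hpoles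
    rw [show g = g * h * h⁻¹ by group]
    exact mul_mem (ih _ (by omega) _ hgh rfl) (inv_mem (Subgroup.subset_closure hL))
  have hsplit := congrArg (divDeg k res) (posPart_add_negPart ((hC.divisor f).erase O))
  rw [divDeg_add] at hsplit
  rcases lt_or_ge (t : ℤ) (divDeg k res ((hC.divisor f).erase O)⁻) with hpoles | hzeros
  · exact descend f hf hpoles rfl
  · rw [← inv_mem_iff]
    refine descend f⁻¹ ?_ ?_ ?_ <;> rw [divisor_inv, erase_neg]
    · exact hf.neg
    · rw [negPart_neg]
      omega
    · rw [abs_neg]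

end IsProjCurve

/-- Lemma `3tlemma`(1).  Let `C` be a regular, irreducible curve,
projective over `k`, with function field `F`, arithmetic genus `t` and a `k`-rational
point `O`.  If `f ∈ F^*` has `|(f)| ⊆ C_{≤ t}`, then `f` lies in the subgroup of `F^*`
generated by the nonzero elements of `RR_{3t} = H⁰(C, O_C(3t(O)))`. -/
theorem statement8 (k F : Type*) [Field k] [Field F] [Algebra k F]
    {Pt : Type*} (res : Pt → Type*) [∀ P, Field (res P)] [∀ P, Algebra k (res P)]
    (ord : Pt → F → ℤ) (ev : ∀ P, F → res P)
    (L : (Pt →₀ ℤ) → Submodule k F) (t : ℕ)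
    (hC : IsProjCurve k F res ord ev L t)
    (O : Pt) (hO : Module.finrank k (res O) = 1)
    (f : Fˣ) (hf : ∀ P, ord P (f : F) ≠ 0 → Module.finrank k (res P) ≤ t) :
    f ∈ Subgroup.closure {g : Fˣ | (g : F) ∈ L (Finsupp.single O (3 * t : ℤ))} :=
  hC.mem_closure_of_isSupportedInDegreeLE hO f
    (IsSupportedInDegreeLE.erase (D := hC.divisor f) hf O)

end
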